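/- arXiv:0708.4298 — 3 statements merged into one kernel-verified Lean document; each statement's English description precedes it below -/
import Mathlib

section
/- Let (X,d,δ) be a dilatation structure. Then (X,d) admits a metric tangent space at every point x ∈ X; more precisely, for every x ∈ X, lim_{ε→0⁺} (1/ε) · sup{ |d(u,v) − d^x(u,v)| : d(x,u) ≤ ε and d(x,v) ≤ ε } = 0, where d^x is the limit distance provided by axiom A3. -/
/-- A dilatation structure `(X, d, δ)` on a locally compact metric space `X`, following
Buliga.  It consists of a constant `A > 1`, open neighbourhoods `U x ⊇ B̄(x,A)`, dilatations
`δ x ε : U x → X` for `ε ∈ (0,1]` with inverses `δinv x ε`, satisfying axioms A0–A4, together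
with the tangent distances `dx x` provided by axiom A3 and the limit operation `Δ` provided
by axiom A4. -/
structure DilatationStructure (X : Type*) [MetricSpace X] [LocallyCompactSpace X] where
  /-- The constant `A > 1`. -/
  A : ℝ
  one_lt_A : 1 < A
  /-- The domain `U x` of the dilatations based at `x`. -/
  U : X → Set X
  U_open : ∀ x, IsOpen (U x)
  closedBall_subset_U : ∀ x, Metric.closedBall x A ⊆ U x
  /-- The dilatation `δ x ε` based at `x` of coefficient `ε`. -/
  δ : X → ℝ → X → X
  /-- The inverse dilatation `δinv x ε = δ^x_{ε⁻¹}`. -/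
  δinv : X → ℝ → X → X
  -- A0
  ball_subset_image : ∀ x, ∀ ε ∈ Set.Ioc (0:ℝ) 1,
    Metric.ball x ε ⊆ δ x ε '' Metric.ball x A
  image_subset_U : ∀ x, ∀ ε ∈ Set.Ioc (0:ℝ) 1, δ x ε '' Metric.ball x A ⊆ U x
  δinv_δ : ∀ x, ∀ ε ∈ Set.Ioc (0:ℝ) 1, ∀ u ∈ U x, δinv x ε (δ x ε u) = u
  -- A1
  δ_fixes_basepoint : ∀ x, ∀ ε ∈ Set.Ioc (0:ℝ) 1, δ x ε x = x
  δ_one : ∀ x y, δ x 1 y = y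
  δ_continuous : Continuous fun p : ℝ × X × X => δ p.2.1 p.1 p.2.2
  δ_tendsto_basepoint : ∀ K : Set X, IsCompact K → ∀ η > 0, ∃ ε₀ > 0,
    ∀ x ∈ K, ∀ y ∈ Metric.closedBall x A, ∀ ε ∈ Set.Ioo (0:ℝ) ε₀, dist (δ x ε y) x ≤ η
  -- A2
  δ_comp : ∀ x, ∀ ε ∈ Set.Ioc (0:ℝ) 1, ∀ μ ∈ Set.Ioc (0:ℝ) 1, ∀ u ∈ Metric.closedBall x A,
    δ x ε (δ x μ u) = δ x (ε * μ) u
  -- A3: the tangent distance `dx x`, a non-degenerate distance on `B̄(x,A)`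
  dx : X → X → X → ℝ
  dx_self : ∀ x, ∀ u ∈ Metric.closedBall x A, dx x u u = 0
  dx_symm : ∀ x, ∀ u ∈ Metric.closedBall x A, ∀ v ∈ Metric.closedBall x A,
    dx x u v = dx x v u
  dx_triangle : ∀ x, ∀ u ∈ Metric.closedBall x A, ∀ v ∈ Metric.closedBall x A,
    ∀ w ∈ Metric.closedBall x A, dx x u w ≤ dx x u v + dx x v w
  dx_nondegenerate : ∀ x, ∀ u ∈ Metric.closedBall x A, ∀ v ∈ Metric.closedBall x A,
    dx x u v = 0 → u = v
  /-- Axiom A3: `(1/ε) d(δ^x_ε u, δ^x_ε v) → dx x u v` as `ε → 0⁺`, uniformly in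
  `u, v ∈ B̄(x,A)` and in `x` in compact sets. -/
  A3 : ∀ K : Set X, IsCompact K → ∀ η > 0, ∃ ε₀ > 0, ∀ x ∈ K, ∀ ε ∈ Set.Ioo (0:ℝ) ε₀,
    ∀ u ∈ Metric.closedBall x A, ∀ v ∈ Metric.closedBall x A,
      |(1 / ε) * dist (δ x ε u) (δ x ε v) - dx x u v| ≤ η
  /-- The limit operation `Δ x u v = lim_{ε→0} δ^{δ^x_ε u}_{ε⁻¹}(δ^x_ε v)` from axiom A4. -/
  Δ : X → X → X → X
  /-- Axiom A4: `δ^{δ^x_ε u}_{ε⁻¹}(δ^x_ε v) → Δ x u v` as `ε → 0⁺`, uniformly with respect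
  to `x, u, v` in compact sets. -/
  A4 : ∀ K : Set X, IsCompact K → ∀ η > 0, ∃ ε₀ > 0, ∀ x ∈ K, ∀ ε ∈ Set.Ioo (0:ℝ) ε₀,
    ∀ u ∈ Metric.closedBall x 1, ∀ v ∈ Metric.closedBall x 1,
      dist (δinv (δ x ε u) ε (δ x ε v)) (Δ x u v) ≤ η


/-- Scaling property of the tangent distance: `dx x (δ^x_ε u) (δ^x_ε v) = ε · dx x u v`,
a consequence of axioms A2 and A3. -/
theorem DilatationStructure.dx_scaling {X : Type*} [MetricSpace X]
    [LocallyCompactSpace X] (DS : DilatationStructure X) (x : X) {ε' : ℝ}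
    (hε' : ε' ∈ Set.Ioc (0:ℝ) 1) {u' v' : X}
    (hu' : u' ∈ Metric.closedBall x DS.A) (hv' : v' ∈ Metric.closedBall x DS.A)
    (hu : DS.δ x ε' u' ∈ Metric.closedBall x DS.A)
    (hv : DS.δ x ε' v' ∈ Metric.closedBall x DS.A) :
    DS.dx x (DS.δ x ε' u') (DS.δ x ε' v') = ε' * DS.dx x u' v' := by
  obtain ⟨hε'0, hε'1⟩ := hε'
  have key : ∀ θ : ℝ, 0 < θ →
      |DS.dx x (DS.δ x ε' u') (DS.δ x ε' v') - ε' * DS.dx x u' v'| ≤ θ := by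
    intro θ hθ
    obtain ⟨ε₂, hε₂0, hA3⟩ := DS.A3 {x} isCompact_singleton (θ/2) (by positivity)
    set μ : ℝ := min ε₂ 1 / 2 with hμdef
    have hμ0 : 0 < μ := by positivity
    have hμε₂ : μ < ε₂ := by
      have : min ε₂ 1 ≤ ε₂ := min_le_left _ _
      nlinarith
    have hμ1 : μ ≤ 1 := by
      have : min ε₂ 1 ≤ 1 := min_le_right _ _
      nlinarith
    have hμε'0 : 0 < μ * ε' := by positivity
    have hμε' : μ * ε' < ε₂ := by nlinarith
    have h1 := hA3 x rfl μ ⟨hμ0, hμε₂⟩ (DS.δ x ε' u') hu (DS.δ x ε' v') hv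
    have h2 := hA3 x rfl (μ * ε') ⟨hμε'0, hμε'⟩ u' hu' v' hv'
    rw [DS.δ_comp x μ ⟨hμ0, hμ1⟩ ε' ⟨hε'0, hε'1⟩ u' hu',
        DS.δ_comp x μ ⟨hμ0, hμ1⟩ ε' ⟨hε'0, hε'1⟩ v' hv'] at h1
    set D := dist (DS.δ x (μ * ε') u') (DS.δ x (μ * ε') v') with hD
    have hrw : (1 / μ) * D = ε' * ((1 / (μ * ε')) * D) := by
      field_simp
    rw [hrw] at h1
    set a := (1 / (μ * ε')) * D with ha
    calc |DS.dx x (DS.δ x ε' u') (DS.δ x ε' v') - ε' * DS.dx x u' v'|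
        ≤ |DS.dx x (DS.δ x ε' u') (DS.δ x ε' v') - ε' * a|
            + |ε' * a - ε' * DS.dx x u' v'| := abs_sub_le _ _ _
      _ ≤ θ/2 + ε' * (θ/2) := by
            refine add_le_add ?_ ?_
            · rw [abs_sub_comm]; exact h1
            · rw [← mul_sub, abs_mul, abs_of_pos hε'0]
              exact mul_le_mul_of_nonneg_left h2 hε'0.le
      _ ≤ θ := by nlinarith
  have h0 : |DS.dx x (DS.δ x ε' u') (DS.δ x ε' v') - ε' * DS.dx x u' v'| ≤ 0 := by
    refine le_of_forall_pos_le_add ?_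
    intro θ hθ
    simpa using key θ hθ
  have := abs_nonneg (DS.dx x (DS.δ x ε' u') (DS.δ x ε' v') - ε' * DS.dx x u' v')
  have habs : |DS.dx x (DS.δ x ε' u') (DS.δ x ε' v') - ε' * DS.dx x u' v'| = 0 :=
    le_antisymm h0 this
  have := abs_eq_zero.mp habs
  linarith

/-- Theorem 4.2 (metric tangent space): if `(X,d,δ)` is a dilatation structure then `(X,d)`
admits a metric tangent space at every point `x`; more precisely
`lim_{ε→0⁺} (1/ε) sup { |d(u,v) - dx x u v| : d(x,u) ≤ ε, d(x,v) ≤ ε } = 0`. -/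
theorem dilatation_structure_metric_tangent {X : Type*} [MetricSpace X]
    [LocallyCompactSpace X] (DS : DilatationStructure X) (x : X) :
    ∀ η > 0, ∃ ε₀ > 0, ∀ ε ∈ Set.Ioo (0:ℝ) ε₀, ∀ u v : X,
      dist x u ≤ ε → dist x v ≤ ε → |dist u v - DS.dx x u v| ≤ η * ε := by
  intro η hη
  obtain ⟨ε₁, hε₁0, hA3⟩ := DS.A3 {x} isCompact_singleton (η/2) (by positivity)
  refine ⟨min ε₁ 1 / 2, by positivity, ?_⟩
  rintro ε ⟨hε0, hεlt⟩ u v hu hv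
  have hεε₁ : 2 * ε < ε₁ := by
    have : min ε₁ 1 ≤ ε₁ := min_le_left _ _
    nlinarith
  have hε1 : 2 * ε < 1 := by
    have : min ε₁ 1 ≤ 1 := min_le_right _ _
    nlinarith
  have h2ε : (2 * ε) ∈ Set.Ioc (0:ℝ) 1 := ⟨by linarith, hε1.le⟩
  have hA1 : (1:ℝ) < DS.A := DS.one_lt_A
  -- u and v are in the image of the dilatation of coefficient 2ε (axiom A0)
  have hub : u ∈ Metric.ball x (2 * ε) := by
    rw [Metric.mem_ball, dist_comm]; linarith
  have hvb : v ∈ Metric.ball x (2 * ε) := by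
    rw [Metric.mem_ball, dist_comm]; linarith
  obtain ⟨u', hu'b, hu'eq⟩ := DS.ball_subset_image x (2 * ε) h2ε hub
  obtain ⟨v', hv'b, hv'eq⟩ := DS.ball_subset_image x (2 * ε) h2ε hvb
  have hu'cb : u' ∈ Metric.closedBall x DS.A := Metric.ball_subset_closedBall hu'b
  have hv'cb : v' ∈ Metric.closedBall x DS.A := Metric.ball_subset_closedBall hv'b
  have hucb : u ∈ Metric.closedBall x DS.A := by
    rw [Metric.mem_closedBall, dist_comm]; linarith
  have hvcb : v ∈ Metric.closedBall x DS.A := by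
    rw [Metric.mem_closedBall, dist_comm]; linarith
  -- apply A3 at scale 2ε
  have h3 := hA3 x rfl (2 * ε) ⟨by linarith, hεε₁⟩ u' hu'cb v' hv'cb
  rw [hu'eq, hv'eq] at h3
  -- scaling property of the tangent distance
  have hscale : DS.dx x u v = 2 * ε * DS.dx x u' v' := by
    have := DS.dx_scaling x h2ε hu'cb hv'cb (hu'eq ▸ hucb) (hv'eq ▸ hvcb)
    rw [hu'eq, hv'eq] at this
    linarith
  rw [hscale]
  rw [abs_le] at h3 ⊢
  have hmul : (1 / (2 * ε)) * dist u v * (2 * ε) = dist u v := by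
    field_simp
  constructor <;> nlinarith [h3.1, h3.2]
end

section
/- Let (X,d,δ) be a dilatation structure and let Δ^x(u,v) = lim_{ε→0} δ^{δ^x_ε u}_{ε⁻¹}(δ^x_ε v) be the limit from axiom A4. Then the tangent distance d^x is left invariant with respect to the induced local group operation: for any x ∈ X and any u, v, w sufficiently close to x, d^x( Δ^x(u,v), Δ^x(u,w) ) = d^x(v,w), i.e. for each u the map v ↦ Δ^x(u,v) preserves the distance d^x. -/
/-! Put `y = δ^x_ε u` and `a_ε = δ^y_{ε⁻¹} δ^x_ε v`, `b_ε = δ^y_{ε⁻¹} δ^x_ε w`. When `u, v, w`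
are close to `x`, the point `δ^x_ε v` lies in `B(y, ε)`, where A0 makes `δ^y_{ε⁻¹}` a genuine
inverse, so `δ^y_ε a_ε = δ^x_ε v` and `δ^y_ε b_ε = δ^x_ε w`. By A3, uniform in the base point,
`d^y(a_ε, b_ε)` is then `(1/ε) d(δ^x_ε v, δ^x_ε w) + o(1)`, which tends to `d^x(v, w)`.
On the other hand `(y, a, b) ↦ d^y(a, b)` is a locally uniform limit of the continuous maps
`(1/μ) d(δ^y_μ a, δ^y_μ b)`, hence continuous; as `y → x`, `a_ε → Δ^x(u, v)` and
`b_ε → Δ^x(u, w)` (A1, A4), the same quantity tends to `d^x(Δ^x(u, v), Δ^x(u, w))`. -/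

open Filter Topology Metric Set

namespace DilatationStructure

variable {X : Type*} [MetricSpace X] [LocallyCompactSpace X] (S : DilatationStructure X)

/-- Buliga's `Δ^x_ε(u, v)`. -/
def Δε (x : X) (ε : ℝ) (u v : X) : X :=
  S.δinv (S.δ x ε u) ε (S.δ x ε v)

theorem closedBall_one_subset (x : X) : closedBall x 1 ⊆ closedBall x S.A :=
  closedBall_subset_closedBall S.one_lt_A.le

theorem δinv_mem_ball {y z : X} {ε : ℝ} (hε : ε ∈ Ioc 0 1) (hz : z ∈ ball y ε) :
    S.δinv y ε z ∈ ball y S.A := by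
  obtain ⟨q, hq, rfl⟩ := S.ball_subset_image y ε hε hz
  rwa [S.δinv_δ y ε hε q (S.closedBall_subset_U y (ball_subset_closedBall hq))]

theorem δ_δinv {y z : X} {ε : ℝ} (hε : ε ∈ Ioc 0 1) (hz : z ∈ ball y ε) :
    S.δ y ε (S.δinv y ε z) = z := by
  obtain ⟨q, hq, rfl⟩ := S.ball_subset_image y ε hε hz
  rw [S.δinv_δ y ε hε q (S.closedBall_subset_U y (ball_subset_closedBall hq))]

theorem tendsto_δ {ι : Type*} {l : Filter ι} {y a : ι → X} {x a₀ : X} (μ : ℝ)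
    (hy : Tendsto y l (𝓝 x)) (ha : Tendsto a l (𝓝 a₀)) :
    Tendsto (fun i => S.δ (y i) μ (a i)) l (𝓝 (S.δ x μ a₀)) :=
  (S.δ_continuous.tendsto (μ, x, a₀)).comp (tendsto_const_nhds.prodMk_nhds (hy.prodMk_nhds ha))

theorem tendsto_δ_basepoint {x u : X} (hu : u ∈ closedBall x S.A) :
    Tendsto (fun ε => S.δ x ε u) (𝓝[>] 0) (𝓝 x) := by
  refine Metric.tendsto_nhds.mpr fun η hη => ?_
  obtain ⟨ε₀, hε₀, h⟩ := S.δ_tendsto_basepoint {x} isCompact_singleton (η / 2) (by positivity)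
  filter_upwards [Ioo_mem_nhdsGT hε₀] with ε hε
  exact (h x rfl u hu ε hε).trans_lt (half_lt_self hη)

theorem tendsto_Δε {x u v : X} (hu : u ∈ closedBall x 1) (hv : v ∈ closedBall x 1) :
    Tendsto (fun ε => S.Δε x ε u v) (𝓝[>] 0) (𝓝 (S.Δ x u v)) := by
  refine Metric.tendsto_nhds.mpr fun η hη => ?_
  obtain ⟨ε₀, hε₀, h⟩ := S.A4 {x} isCompact_singleton (η / 2) (by positivity)
  filter_upwards [Ioo_mem_nhdsGT hε₀] with ε hε
  exact (h x rfl ε hε u hu v hv).trans_lt (half_lt_self hη)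

theorem tendsto_dist_δ_div_sub_dx {y a b : ℝ → X} {x : X} (hy : Tendsto y (𝓝[>] 0) (𝓝 x))
    (hab : ∀ᶠ ε in 𝓝[>] 0, a ε ∈ closedBall (y ε) S.A ∧ b ε ∈ closedBall (y ε) S.A) :
    Tendsto (fun ε => 1 / ε * dist (S.δ (y ε) ε (a ε)) (S.δ (y ε) ε (b ε)) -
      S.dx (y ε) (a ε) (b ε)) (𝓝[>] 0) (𝓝 0) := by
  refine Metric.tendsto_nhds.mpr fun η hη => ?_
  obtain ⟨K, hK, hxK⟩ := exists_compact_mem_nhds x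
  obtain ⟨ε₀, hε₀, hA3⟩ := S.A3 K hK (η / 2) (by positivity)
  filter_upwards [hy hxK, hab, Ioo_mem_nhdsGT hε₀] with ε hyε ⟨haε, hbε⟩ hε
  rw [Real.dist_eq, sub_zero]
  exact (hA3 (y ε) hyε ε hε (a ε) haε (b ε) hbε).trans_lt (half_lt_self hη)

theorem tendsto_dist_δ_div {x u v : X} (hu : u ∈ closedBall x S.A) (hv : v ∈ closedBall x S.A) :
    Tendsto (fun ε => 1 / ε * dist (S.δ x ε u) (S.δ x ε v)) (𝓝[>] 0) (𝓝 (S.dx x u v)) := by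
  simpa using (S.tendsto_dist_δ_div_sub_dx (a := fun _ => u) (b := fun _ => v)
    tendsto_const_nhds (Eventually.of_forall fun _ => ⟨hu, hv⟩)).add_const (S.dx x u v)

theorem tendsto_dx {ι : Type*} {l : Filter ι} {y a b : ι → X} {x a₀ b₀ : X}
    (hy : Tendsto y l (𝓝 x)) (ha : Tendsto a l (𝓝 a₀)) (hb : Tendsto b l (𝓝 b₀))
    (ha₀ : a₀ ∈ closedBall x S.A) (hb₀ : b₀ ∈ closedBall x S.A)
    (hab : ∀ᶠ i in l, a i ∈ closedBall (y i) S.A ∧ b i ∈ closedBall (y i) S.A) :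
    Tendsto (fun i => S.dx (y i) (a i) (b i)) l (𝓝 (S.dx x a₀ b₀)) := by
  refine Metric.tendsto_nhds.mpr fun η hη => ?_
  obtain ⟨K, hK, hxK⟩ := exists_compact_mem_nhds x
  obtain ⟨μ₀, hμ₀, hA3⟩ := S.A3 K hK (η / 3) (by positivity)
  have hμ : μ₀ / 2 ∈ Ioo 0 μ₀ := ⟨half_pos hμ₀, half_lt_self hμ₀⟩
  have hscaled := ((S.tendsto_δ (μ₀ / 2) hy ha).dist (S.tendsto_δ (μ₀ / 2) hy hb)).const_mul
    (1 / (μ₀ / 2))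
  obtain ⟨h₁, h₂⟩ := abs_le.mp (hA3 x (mem_of_mem_nhds hxK) _ hμ a₀ ha₀ b₀ hb₀)
  filter_upwards [hy hxK, hab, Metric.tendsto_nhds.mp hscaled (η / 3) (by positivity)]
    with i hyi ⟨hai, hbi⟩ hi
  obtain ⟨h₃, h₄⟩ := abs_le.mp (hA3 (y i) hyi _ hμ (a i) hai (b i) hbi)
  obtain ⟨h₅, h₆⟩ := abs_sub_lt_iff.mp (Real.dist_eq _ _ ▸ hi)
  rw [Real.dist_eq, abs_sub_lt_iff]
  constructor <;> linarith

theorem eventually_dx_lt (x : X) {η : ℝ} (hη : 0 < η) :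
    ∀ᶠ p in 𝓝 (x, x), S.dx x p.1 p.2 < η := by
  have hA : closedBall x S.A ∈ 𝓝 x := closedBall_mem_nhds x (by linarith [S.one_lt_A])
  have hfst : Tendsto Prod.fst (𝓝 (x, x)) (𝓝 x) := continuous_fst.continuousAt
  have hsnd : Tendsto Prod.snd (𝓝 (x, x)) (𝓝 x) := continuous_snd.continuousAt
  have hlim : Tendsto (fun p : X × X => S.dx x p.1 p.2) (𝓝 (x, x)) (𝓝 (S.dx x x x)) :=
    S.tendsto_dx tendsto_const_nhds hfst hsnd (mem_of_mem_nhds hA) (mem_of_mem_nhds hA)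
      ((hfst.eventually hA).and (hsnd.eventually hA))
  rw [S.dx_self x x (mem_of_mem_nhds hA)] at hlim
  exact hlim.eventually (gt_mem_nhds hη)

theorem eventually_Δε_mem_ball_and_δ_Δε_eq {x u v : X} (hu : u ∈ closedBall x S.A)
    (hv : v ∈ closedBall x S.A) (hvu : S.dx x v u < 1) :
    ∀ᶠ ε in 𝓝[>] 0, S.Δε x ε u v ∈ ball (S.δ x ε u) S.A ∧
      S.δ (S.δ x ε u) ε (S.Δε x ε u v) = S.δ x ε v := by
  filter_upwards [(S.tendsto_dist_δ_div hv hu).eventually (gt_mem_nhds hvu),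
    Ioc_mem_nhdsGT one_pos] with ε hlt hε
  have hball : S.δ x ε v ∈ ball (S.δ x ε u) ε := by
    rw [one_div, inv_mul_lt_iff₀ hε.1, mul_one] at hlt
    exact mem_ball.mpr hlt
  exact ⟨S.δinv_mem_ball hε hball, S.δ_δinv hε hball⟩

theorem Δ_mem_closedBall {x u v : X} (hu : u ∈ closedBall x 1) (hv : v ∈ closedBall x 1)
    (h : ∀ᶠ ε in 𝓝[>] 0, S.Δε x ε u v ∈ ball (S.δ x ε u) S.A) :
    S.Δ x u v ∈ closedBall x S.A :=
  le_of_tendsto ((S.tendsto_Δε hu hv).dist (S.tendsto_δ_basepoint (S.closedBall_one_subset x hu)))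
    (h.mono fun _ hε => (mem_ball.mp hε).le)

theorem dx_Δ_Δ {x u v w : X} (hu : u ∈ closedBall x 1) (hv : v ∈ closedBall x 1)
    (hw : w ∈ closedBall x 1) (hvu : S.dx x v u < 1) (hwu : S.dx x w u < 1) :
    S.dx x (S.Δ x u v) (S.Δ x u w) = S.dx x v w := by
  have hA := S.closedBall_one_subset x
  have hy := S.tendsto_δ_basepoint (hA hu)
  have hv' := S.eventually_Δε_mem_ball_and_δ_Δε_eq (hA hu) (hA hv) hvu
  have hw' := S.eventually_Δε_mem_ball_and_δ_Δε_eq (hA hu) (hA hw) hwu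
  have hmem : ∀ᶠ ε in 𝓝[>] 0, S.Δε x ε u v ∈ closedBall (S.δ x ε u) S.A ∧
      S.Δε x ε u w ∈ closedBall (S.δ x ε u) S.A := by
    filter_upwards [hv', hw'] with ε h₁ h₂ using
      ⟨ball_subset_closedBall h₁.1, ball_subset_closedBall h₂.1⟩
  have hlimΔ := S.tendsto_dx hy (S.tendsto_Δε hu hv) (S.tendsto_Δε hu hw)
    (S.Δ_mem_closedBall hu hv (hv'.mono fun _ h => h.1))
    (S.Δ_mem_closedBall hu hw (hw'.mono fun _ h => h.1)) hmem
  have hlim : Tendsto (fun ε => S.dx (S.δ x ε u) (S.Δε x ε u v) (S.Δε x ε u w)) (𝓝[>] 0)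
      (𝓝 (S.dx x v w)) := by
    have h := (S.tendsto_dist_δ_div (hA hv) (hA hw)).sub (S.tendsto_dist_δ_div_sub_dx hy hmem)
    rw [sub_zero] at h
    refine h.congr' ?_
    filter_upwards [hv', hw'] with ε hδv hδw
    rw [hδv.2, hδw.2, sub_sub_cancel]
  exact tendsto_nhds_unique hlimΔ hlim

end DilatationStructure

/-- Left invariance of the tangent distance with respect to the induced local group
operation: for a dilatation structure `(X,d,δ)` and any `x`, for `u, v, w` sufficiently
close to `x`, `dx x (Δ x u v) (Δ x u w) = dx x v w`; i.e. for each `u` the map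
`v ↦ Δ x u v` preserves the tangent distance `dx x`. -/
theorem dilatation_structure_dx_left_invariant {X : Type*} [MetricSpace X]
    [LocallyCompactSpace X] (DS : DilatationStructure X) (x : X) :
    ∃ r > 0, ∀ u v w : X, dist x u ≤ r → dist x v ≤ r → dist x w ≤ r →
      DS.dx x (DS.Δ x u v) (DS.Δ x u w) = DS.dx x v w := by
  obtain ⟨ρ, hρ, hsmall⟩ := Metric.eventually_nhds_iff.mp (DS.eventually_dx_lt x one_pos)
  refine ⟨min (ρ / 2) 1, by positivity, fun u v w hu hv hw => ?_⟩
  have hball : ∀ {z}, dist x z ≤ min (ρ / 2) 1 → z ∈ closedBall x 1 := fun hz =>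
    mem_closedBall'.mpr (hz.trans (min_le_right _ _))
  have hclose : ∀ {z z'}, dist x z ≤ min (ρ / 2) 1 → dist x z' ≤ min (ρ / 2) 1 →
      DS.dx x z z' < 1 := fun {z z'} hz hz' => hsmall (y := (z, z')) <| by
    rw [Prod.dist_eq, dist_comm z, dist_comm z', max_lt_iff]
    constructor <;> linarith [min_le_left (ρ / 2) 1]
  exact DS.dx_Δ_Δ (hball hu) (hball hv) (hball hw) (hclose hv hu) (hclose hw hu)
end

section
/- (Axiom A4 for the nonstandard dilatations in the plane.) Fix θ ∈ ℝ, set z = 1 + iθ ∈ ℂ, and for x ∈ ℂ, ε > 0 define δ^x_ε y = x + ε^z (y − x), with ε^z the principal complex power. Then for all x, u, v ∈ ℂ and all ε > 0, δ^{δ^x_ε u}_{1/ε}( δ^x_ε v ) = x + ε^z (u − x) + (v − u), and consequently δ^{δ^x_ε u}_{1/ε}( δ^x_ε v ) → x + v − u as ε → 0⁺. -/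
open Filter Topology

/-- The nonstandard dilatation on `ℂ` based at `x`, of coefficient `ε > 0`, associated to
`z = 1 + iθ`: `δ^x_ε y = x + ε^z (y - x)`, with `ε^z` the principal complex power. -/
noncomputable def nonstdDil (θ : ℝ) (x : ℂ) (ε : ℝ) (y : ℂ) : ℂ :=
  x + (ε : ℂ) ^ ((1 : ℂ) + θ * Complex.I) * (y - x)

lemma Complex.ofReal_one_div_cpow_mul_cpow {ε : ℝ} (hε : 0 < ε) (s : ℂ) :
    ((1 / ε : ℝ) : ℂ) ^ s * (ε : ℂ) ^ s = 1 := by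
  rw [one_div, Complex.ofReal_inv, Complex.inv_cpow_ofReal_nonneg hε.le,
    inv_mul_cancel₀ (by simp [Complex.cpow_eq_zero_iff, hε.ne'])]

lemma nonstdDil_one_div_nonstdDil (θ : ℝ) (x u w : ℂ) {ε : ℝ} (hε : 0 < ε) :
    nonstdDil θ (nonstdDil θ x ε u) (1 / ε) (nonstdDil θ x ε w) =
      nonstdDil θ x ε u + (w - u) := by
  have h := Complex.ofReal_one_div_cpow_mul_cpow hε ((1 : ℂ) + θ * Complex.I)
  unfold nonstdDil
  linear_combination (w - u) * h

lemma tendsto_nonstdDil_nhdsGT_zero (θ : ℝ) (x y : ℂ) :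
    Tendsto (fun ε : ℝ => nonstdDil θ x ε y) (𝓝[>] 0) (𝓝 x) := by
  have hre : 0 < ((1 : ℂ) + θ * Complex.I).re := by simp
  have hpow := (Complex.continuousAt_ofReal_cpow_const 0 _ (Or.inl hre)).tendsto
  rw [Complex.ofReal_zero, Complex.zero_cpow (Complex.ne_zero_of_re_pos hre)] at hpow
  simpa [nonstdDil] using tendsto_nhdsWithin_of_tendsto_nhds ((hpow.mul_const (y - x)).const_add x)

/-- Axiom A4 for the nonstandard dilatations in the plane: with `z = 1 + iθ`,
`δ^{δ^x_ε u}_{1/ε}(δ^x_ε v) = x + ε^z (u - x) + (v - u)`, which converges to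
`x + v - u` as `ε → 0⁺`. -/
theorem nonstd_dilatations_plane_A4 (θ : ℝ) (x u v : ℂ) :
    (∀ ε : ℝ, 0 < ε →
      nonstdDil θ (nonstdDil θ x ε u) (1 / ε) (nonstdDil θ x ε v)
        = x + (ε : ℂ) ^ ((1 : ℂ) + θ * Complex.I) * (u - x) + (v - u)) ∧
    Filter.Tendsto (fun ε : ℝ => nonstdDil θ (nonstdDil θ x ε u) (1 / ε) (nonstdDil θ x ε v))
      (nhdsWithin 0 (Set.Ioi 0)) (nhds (x + v - u)) := by
  refine ⟨fun ε hε => nonstdDil_one_div_nonstdDil θ x u v hε, ?_⟩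
  have hlim := (tendsto_nonstdDil_nhdsGT_zero θ x u).add_const (v - u)
  rw [← add_sub_assoc] at hlim
  refine hlim.congr' ?_
  filter_upwards [self_mem_nhdsWithin] with ε hε
  exact (nonstdDil_one_div_nonstdDil θ x u v hε).symm
end
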